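/- arXiv:1701.04140 — 6 statements merged into one kernel-verified Lean document; each statement's English description precedes it below -/
import Mathlib

section
/- A linear subspace H of gl_n(ℂ) containing the Borel subalgebra b of upper triangular matrices and closed under bracket with b ([b, H] ⊆ H) is uniquely determined by a Hessenberg function h: {1,…,n} → {1,…,n} satisfying h(i) ≥ i for all i and h(i) ≥ h(i−1) for all i ≥ 2, via the rule that H = {X ∈ gl_n(ℂ) : X_{ij} = 0 whenever i > h(j)}. Conversely, for any function h satisfying these two conditions, the space H defined by this rule contains b and satisfies [b, H] ⊆ H. -/
/-! `hessSpace h` is spanned by the matrix units `E i j` with `i ≤ h j`, and it is `b`-stable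
because left multiplication by `b` moves entries up and, for monotone `h`, right multiplication
moves them right. Conversely, for a `b`-stable `H` the diagonal units give the identity
`[E_jj, [E_ii, [E_jj, X]]] - [E_ii, [E_jj, X]] = 2 E_ii X E_jj`, so `H` contains every entry
`X i j • E i j` of each of its elements and is therefore spanned by the matrix units it contains.
Bracketing with `E i' i` (`i' < i`) and `E j j'` (`j < j'`) shows that these units are closed under
moving up and right, so they are exactly those with `i ≤ h j` for the nondecreasing
`h j = max {i | E i j ∈ H}`. -/

/-- The linear subspace of `gl_n(ℂ)` determined by a function `h : Fin n → Fin n`: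
matrices `X` with `X i j = 0` whenever `i > h j`.  For `h = id` this is the Borel
subalgebra `b` of upper triangular matrices. -/
noncomputable def hessSpace {n : ℕ} (h : Fin n → Fin n) :
    Submodule ℂ (Matrix (Fin n) (Fin n) ℂ) where
  carrier := {X | ∀ i j, h j < i → X i j = 0}
  add_mem' := by
    intro a b ha hb i j hij
    simp [Matrix.add_apply, ha i j hij, hb i j hij]
  zero_mem' := by intro i j _; simp
  smul_mem' := by
    intro c a ha i j hij
    simp [Matrix.smul_apply, ha i j hij]

open Matrix

theorem lie_lie_lie_sub_lie_lie_eq_two_nsmul {R : Type*} [Ring R] {e f : R}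
    (hf : f * f = f) (hef : e * f = 0) (hfe : f * e = 0) (x : R) :
    ⁅f, ⁅e, ⁅f, x⁆⁆⁆ - ⁅e, ⁅f, x⁆⁆ = 2 • (e * x * f) := by
  have hf' : ∀ y, y * f * f = y * f := fun y => by rw [mul_assoc, hf]
  have hef' : ∀ y, y * e * f = 0 := fun y => by rw [mul_assoc, hef, mul_zero]
  have hfe' : ∀ y, y * f * e = 0 := fun y => by rw [mul_assoc, hfe, mul_zero]
  simp only [Ring.lie_def, mul_sub, sub_mul, ← mul_assoc]
  simp only [hf, hef, hfe, hf', hef', hfe', zero_mul, sub_zero, zero_sub, sub_neg_eq_add]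
  abel

theorem Submodule.eq_of_single_mem_iff {m n R : Type*} [Fintype m] [Fintype n] [DecidableEq m]
    [DecidableEq n] [Semiring R] {H H' : Submodule R (Matrix m n R)}
    (hH : ∀ X ∈ H, ∀ i j, single i j (X i j) ∈ H) (hH' : ∀ X ∈ H', ∀ i j, single i j (X i j) ∈ H')
    (h : ∀ i j c, single i j c ∈ H ↔ single i j c ∈ H') : H = H' := by
  ext X
  constructor <;> intro hX <;> rw [matrix_eq_sum_single X]
  · exact sum_mem fun i _ => sum_mem fun j _ => (h i j _).1 (hH X hX i j)
  · exact sum_mem fun i _ => sum_mem fun j _ => (h i j _).2 (hH' X hX i j)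

theorem Submodule.single_mem_iff_single_one_mem {m n K : Type*} [DecidableEq m] [DecidableEq n]
    [Field K] {H : Submodule K (Matrix m n K)} {i : m} {j : n} {c : K} (hc : c ≠ 0) :
    single i j c ∈ H ↔ single i j 1 ∈ H := by
  have hsmul : ∀ a : K, single i j a = a • single i j 1 := fun a => by simp
  rw [hsmul c]
  exact H.smul_mem_iff hc

section HessSpace

variable {n : ℕ}

theorem single_mem_hessSpace {h : Fin n → Fin n} {i j : Fin n} (hle : i ≤ h j) (c : ℂ) :
    single i j c ∈ hessSpace h := by
  intro a b hab
  apply single_apply_of_ne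
  rintro ⟨rfl, rfl⟩
  exact hab.not_ge hle

theorem single_mem_hessSpace_iff {h : Fin n → Fin n} {i j : Fin n} {c : ℂ} (hc : c ≠ 0) :
    single i j c ∈ hessSpace h ↔ i ≤ h j := by
  refine ⟨fun hm => ?_, fun hle => single_mem_hessSpace hle c⟩
  by_contra hlt
  simpa [hc] using hm i j (not_le.mp hlt)

theorem single_apply_mem_hessSpace {h : Fin n → Fin n} {X : Matrix (Fin n) (Fin n) ℂ}
    (hX : X ∈ hessSpace h) (i j : Fin n) : single i j (X i j) ∈ hessSpace h := by
  by_cases hc : X i j = 0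
  · simp [hc]
  · exact (single_mem_hessSpace_iff hc).2 (not_lt.mp (mt (hX i j) hc))

theorem hessSpace_injective : Function.Injective (hessSpace (n := n)) := by
  intro h h' heq
  funext j
  apply eq_of_forall_le_iff
  intro i
  rw [← single_mem_hessSpace_iff (one_ne_zero (α := ℂ)), heq, single_mem_hessSpace_iff one_ne_zero]

theorem hessSpace_mono {h h' : Fin n → Fin n} (hle : h ≤ h') : hessSpace h ≤ hessSpace h' :=
  fun _ hX i j hij => hX i j ((hle j).trans_lt hij)

theorem borel_mul_mem_hessSpace {h : Fin n → Fin n} {A X : Matrix (Fin n) (Fin n) ℂ}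
    (hA : A ∈ hessSpace id) (hX : X ∈ hessSpace h) : A * X ∈ hessSpace h := by
  intro i j hij
  rw [mul_apply]
  refine Finset.sum_eq_zero fun k _ => ?_
  rcases lt_or_ge k i with hki | hik
  · rw [hA i k hki, zero_mul]
  · rw [hX k j (hij.trans_le hik), mul_zero]

theorem mul_borel_mem_hessSpace {h : Fin n → Fin n} (hh : Monotone h)
    {A X : Matrix (Fin n) (Fin n) ℂ} (hX : X ∈ hessSpace h) (hA : A ∈ hessSpace id) :
    X * A ∈ hessSpace h := by
  intro i j hij
  rw [mul_apply]
  refine Finset.sum_eq_zero fun k _ => ?_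
  rcases lt_or_ge j k with hjk | hkj
  · rw [hA k j hjk, mul_zero]
  · rw [hX i k ((hh hkj).trans_lt hij), zero_mul]

theorem lie_mem_hessSpace {h : Fin n → Fin n} (hh : Monotone h) {A X : Matrix (Fin n) (Fin n) ℂ}
    (hA : A ∈ hessSpace id) (hX : X ∈ hessSpace h) : ⁅A, X⁆ ∈ hessSpace h :=
  sub_mem (borel_mul_mem_hessSpace hA hX) (mul_borel_mem_hessSpace hh hX hA)

end HessSpace

section BorelStable

variable {n : ℕ} {H : Submodule ℂ (Matrix (Fin n) (Fin n) ℂ)}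

theorem single_apply_mem_of_lie_mem (hbr : ∀ A ∈ hessSpace (n := n) id, ∀ X ∈ H, ⁅A, X⁆ ∈ H)
    {X : Matrix (Fin n) (Fin n) ℂ} (hX : X ∈ H) {i j : Fin n} (hij : i ≠ j) :
    single i j (X i j) ∈ H := by
  have hdiag : ∀ k : Fin n, single k k (1 : ℂ) ∈ hessSpace id := fun k => single_mem_hessSpace le_rfl 1
  have hident := lie_lie_lie_sub_lie_lie_eq_two_nsmul (e := single i i (1 : ℂ))
    (f := single j j 1) (by simp) (by simp [hij]) (by simp [hij.symm]) X
  rw [single_mul_mul_single, one_mul, mul_one] at hident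
  have htwo : (2 : ℕ) • single i j (X i j) ∈ H := by
    rw [← hident]
    have hfX := hbr _ (hdiag j) X hX
    exact sub_mem (hbr _ (hdiag j) _ (hbr _ (hdiag i) _ hfX)) (hbr _ (hdiag i) _ hfX)
  rwa [← Nat.cast_smul_eq_nsmul ℂ, H.smul_mem_iff (by norm_num)] at htwo

theorem single_apply_mem (hb : hessSpace id ≤ H)
    (hbr : ∀ A ∈ hessSpace (n := n) id, ∀ X ∈ H, ⁅A, X⁆ ∈ H)
    {X : Matrix (Fin n) (Fin n) ℂ} (hX : X ∈ H) (i j : Fin n) : single i j (X i j) ∈ H := by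
  rcases eq_or_ne i j with rfl | hij
  · exact hb (single_mem_hessSpace le_rfl _)
  · exact single_apply_mem_of_lie_mem hbr hX hij

theorem single_one_mem_of_le_left (hb : hessSpace id ≤ H)
    (hbr : ∀ A ∈ hessSpace (n := n) id, ∀ X ∈ H, ⁅A, X⁆ ∈ H) {i i' j : Fin n} (hle : i' ≤ i)
    (hm : single i j (1 : ℂ) ∈ H) : single i' j (1 : ℂ) ∈ H := by
  rcases hle.lt_or_eq with hlt | rfl
  · have hentry : ⁅single i' i (1 : ℂ), single i j (1 : ℂ)⁆ i' j = 1 := by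
      simp [Ring.lie_def, hlt.ne]
    have := single_apply_mem hb hbr (hbr _ (single_mem_hessSpace hlt.le 1) _ hm) i' j
    rwa [hentry] at this
  · exact hm

theorem single_one_mem_of_le_right (hb : hessSpace id ≤ H)
    (hbr : ∀ A ∈ hessSpace (n := n) id, ∀ X ∈ H, ⁅A, X⁆ ∈ H) {i j j' : Fin n} (hle : j ≤ j')
    (hm : single i j (1 : ℂ) ∈ H) : single i j' (1 : ℂ) ∈ H := by
  rcases hle.lt_or_eq with hlt | rfl
  · have hentry : ⁅single j j' (1 : ℂ), single i j (1 : ℂ)⁆ i j' = -1 := by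
      simp [Ring.lie_def, hlt.ne']
    have := single_apply_mem hb hbr (hbr _ (single_mem_hessSpace hlt.le 1) _ hm) i j'
    rwa [hentry, Submodule.single_mem_iff_single_one_mem (neg_ne_zero.2 one_ne_zero)] at this
  · exact hm

/-- `insert j` makes the maximum total; it changes nothing once `hessSpace id ≤ H`. -/
noncomputable def hessFun (H : Submodule ℂ (Matrix (Fin n) (Fin n) ℂ)) (j : Fin n) : Fin n :=
  open Classical in
  (insert j (Finset.univ.filter fun i => single i j (1 : ℂ) ∈ H)).max' (Finset.insert_nonempty _ _)

theorem le_hessFun (H : Submodule ℂ (Matrix (Fin n) (Fin n) ℂ)) (j : Fin n) : j ≤ hessFun H j :=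
  Finset.le_max' _ _ (Finset.mem_insert_self _ _)

theorem single_one_mem_iff_le_hessFun (hb : hessSpace id ≤ H)
    (hbr : ∀ A ∈ hessSpace (n := n) id, ∀ X ∈ H, ⁅A, X⁆ ∈ H) {i j : Fin n} :
    single i j (1 : ℂ) ∈ H ↔ i ≤ hessFun H j := by
  classical
  constructor
  · intro hm
    exact Finset.le_max' _ _ (Finset.mem_insert_of_mem (by simpa using hm))
  · intro hle
    refine single_one_mem_of_le_left hb hbr hle ?_
    have hmax : hessFun H j ∈ insert j (Finset.univ.filter fun i => single i j (1 : ℂ) ∈ H) :=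
      Finset.max'_mem _ _
    rcases Finset.mem_insert.1 hmax with hj | hmem
    · rw [hj]
      exact hb (single_mem_hessSpace le_rfl 1)
    · simpa using hmem

theorem monotone_hessFun (hb : hessSpace id ≤ H)
    (hbr : ∀ A ∈ hessSpace (n := n) id, ∀ X ∈ H, ⁅A, X⁆ ∈ H) : Monotone (hessFun H) :=
  fun _ _ hjj' => (single_one_mem_iff_le_hessFun hb hbr).1 <|
    single_one_mem_of_le_right hb hbr hjj' ((single_one_mem_iff_le_hessFun hb hbr).2 le_rfl)

theorem eq_hessSpace_hessFun (hb : hessSpace id ≤ H)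
    (hbr : ∀ A ∈ hessSpace (n := n) id, ∀ X ∈ H, ⁅A, X⁆ ∈ H) : H = hessSpace (hessFun H) := by
  refine Submodule.eq_of_single_mem_iff (fun X hX => single_apply_mem hb hbr hX)
    (fun X hX => single_apply_mem_hessSpace hX) fun i j c => ?_
  rcases eq_or_ne c 0 with rfl | hc
  · simp only [single_zero, zero_mem]
  · rw [Submodule.single_mem_iff_single_one_mem hc, single_one_mem_iff_le_hessFun hb hbr,
      single_mem_hessSpace_iff hc]

end BorelStable

/-- a linear subspace `H ⊆ gl_n(ℂ)` containing the Borel subalgebra `b`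
of upper triangular matrices and satisfying `[b, H] ⊆ H` is uniquely determined by a
Hessenberg function `h` (`h i ≥ i`, `h` nondecreasing) via
`H = {X : X i j = 0 whenever i > h j}`; conversely for any such `h`, the space so
defined contains `b` and satisfies `[b, H] ⊆ H`. -/
theorem statement4 {n : ℕ} :
    (∀ H : Submodule ℂ (Matrix (Fin n) (Fin n) ℂ),
      hessSpace id ≤ H →
      (∀ A ∈ hessSpace (n := n) id, ∀ X ∈ H, A * X - X * A ∈ H) →
      ∃! h : Fin n → Fin n, (∀ i, i ≤ h i) ∧ Monotone h ∧ H = hessSpace h) ∧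
    (∀ h : Fin n → Fin n, (∀ i, i ≤ h i) → Monotone h →
      hessSpace id ≤ hessSpace h ∧
      ∀ A ∈ hessSpace (n := n) id, ∀ X ∈ hessSpace h, A * X - X * A ∈ hessSpace h) := by
  refine ⟨fun H hb hbr => ?_, fun h hge hmono =>
    ⟨hessSpace_mono hge, fun A hA X hX => lie_mem_hessSpace hmono hA hX⟩⟩
  have hH : H = hessSpace (hessFun H) := eq_hessSpace_hessFun hb hbr
  refine ⟨hessFun H, ⟨le_hessFun H, monotone_hessFun hb hbr, hH⟩, ?_⟩
  rintro h ⟨-, -, rfl⟩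
  exact hessSpace_injective hH
end

section
/- Let h: {1,…,n} → {1,…,n} be a Hessenberg function (h(i) ≥ i, h nondecreasing). Then the image of h consists precisely of the fixed points of h if and only if the associated Hessenberg space H = {X : X_{ij} = 0 for i > h(j)} is closed under matrix multiplication (equivalently, H is a parabolic subalgebra of gl_n(ℂ), i.e., a block upper triangular matrix algebra). -/
/-- for a Hessenberg function `h` (`h i ≥ i`, `h` nondecreasing), the
image of `h` consists exactly of the fixed points of `h` if and only if the
Hessenberg space `H = {X : X i j = 0 for i > h j}` is closed under matrix
multiplication (i.e. is a (block upper triangular) parabolic subalgebra). -/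
theorem statement5 {n : ℕ} (h : Fin n → Fin n) (h1 : ∀ i, i ≤ h i) (h2 : Monotone h) :
    Set.range h = {i | h i = i} ↔
      ∀ X ∈ hessSpace h, ∀ Y ∈ hessSpace h, X * Y ∈ hessSpace h := by
  constructor
  · intro hr X hX Y hY i j hij
    have hfix : ∀ k, h (h k) = h k := by
      intro k
      have hk : h k ∈ Set.range h := ⟨k, rfl⟩
      rw [hr] at hk
      exact hk
    show (X * Y) i j = 0
    rw [Matrix.mul_apply]
    apply Finset.sum_eq_zero
    intro k _
    by_cases hk : h j < k
    · rw [hY k j hk, mul_zero]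
    · push_neg at hk
      have hlt : h k < i := lt_of_le_of_lt ((h2 hk).trans (le_of_eq (hfix j))) hij
      rw [hX i k hlt, zero_mul]
  · intro hc
    ext i
    simp only [Set.mem_range, Set.mem_setOf_eq]
    constructor
    · rintro ⟨j, rfl⟩
      by_contra hne
      have hlt : h j < h (h j) := lt_of_le_of_ne (h1 _) (Ne.symm hne)
      have hX : Matrix.single (h (h j)) (h j) (1:ℂ) ∈ hessSpace h := by
        intro a b hab
        simp only [Matrix.single, Matrix.of_apply]
        rw [if_neg]
        rintro ⟨rfl, rfl⟩
        exact lt_irrefl _ hab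
      have hY : Matrix.single (h j) j (1:ℂ) ∈ hessSpace h := by
        intro a b hab
        simp only [Matrix.single, Matrix.of_apply]
        rw [if_neg]
        rintro ⟨rfl, rfl⟩
        exact lt_irrefl _ hab
      have := hc _ hX _ hY (h (h j)) j hlt
      rw [Matrix.single_mul_single_same] at this
      simp [Matrix.single] at this
    · intro hi
      exact ⟨i, hi⟩
end

section
/- Let Φ be a root system of type A_{n−1} with Weyl group W = S_n, let J ⊆ Δ, and let X = Σ_{γ ∈ Φ_X} E_γ be a nilpotent matrix supported on a set Φ_X of positive roots (i.e., X is strictly upper triangular). Write w ∈ W as w = vy where v is the minimal-length coset representative of wW_J and y ∈ W_J. Then w⁻¹ · X := Ad(w⁻¹)X lies in the standard parabolic subalgebra p_J if and only if v⁻¹ · X lies in the Borel subalgebra b of upper triangular matrices. -/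
/-- Simple reflection `s_i` in `S_{n+1}` (type `A_n`), swapping positions `i` and `i+1`. -/
def sgen {n : ℕ} (i : Fin n) : Equiv.Perm (Fin (n + 1)) :=
  Equiv.swap i.castSucc i.succ

/-- Action of a permutation on a root `ε_{p.1} - ε_{p.2}` of type `A`. -/
def actRoot {n : ℕ} (w : Equiv.Perm (Fin n)) (p : Fin n × Fin n) : Fin n × Fin n :=
  (w p.1, w p.2)

/-- The root `ε_{p.1} - ε_{p.2}` is positive. -/
def IsPosRoot {n : ℕ} (p : Fin n × Fin n) : Prop := p.1 < p.2

/-- The root `ε_{p.1} - ε_{p.2}` is negative. -/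
def IsNegRoot {n : ℕ} (p : Fin n × Fin n) : Prop := p.2 < p.1

/-- Inversion set `N(w) = {γ ∈ Φ⁺ : w(γ) ∈ Φ⁻}`. -/
def invSet {n : ℕ} (w : Equiv.Perm (Fin n)) : Set (Fin n × Fin n) :=
  {p | IsPosRoot p ∧ IsNegRoot (actRoot w p)}

/-- Bruhat length = number of inversions. -/
def len {n : ℕ} (w : Equiv.Perm (Fin n)) : ℕ :=
  (Finset.univ.filter fun p : Fin n × Fin n => p.1 < p.2 ∧ w p.2 < w p.1).card

/-- The parabolic subgroup `W_J` generated by the simple reflections indexed by `J`. -/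
def WJ {n : ℕ} (J : Set (Fin n)) : Subgroup (Equiv.Perm (Fin (n + 1))) :=
  Subgroup.closure (sgen '' J)

/-- Membership in the sub-root-system `Φ_J` spanned by the simple roots indexed by `J`:
all simple roots in the support of the root lie in `J`. -/
def InPhiJ {n : ℕ} (J : Set (Fin n)) (p : Fin (n + 1) × Fin (n + 1)) : Prop :=
  p.1 ≠ p.2 ∧ ∀ k : Fin n, min p.1 p.2 ≤ k.castSucc → k.succ ≤ max p.1 p.2 → k ∈ J

/-- `v` is the minimal-length representative of its coset `vW_J`. -/
def IsMinRep {n : ℕ} (J : Set (Fin n)) (v : Equiv.Perm (Fin (n + 1))) : Prop :=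
  ∀ y ∈ WJ J, len v ≤ len (v * y)

/-- Membership in the standard parabolic subalgebra `p_J ⊆ gl_{n+1}(ℂ)`: entries below
the diagonal vanish unless the corresponding negative root lies in `Φ_J`. -/
def InParabolic {n : ℕ} (J : Set (Fin n)) (M : Matrix (Fin (n + 1)) (Fin (n + 1)) ℂ) :
    Prop :=
  ∀ i j : Fin (n + 1), j < i → ¬ InPhiJ J (i, j) → M i j = 0
/-!
Call `i` and `j` *in the same block* when every simple root between them lies in `J`; the
blocks are the diagonal blocks of `p_J`, they are intervals, and `(i, j)` with `j < i` lies in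
`Φ_J⁻` exactly when `i` and `j` are in the same block. Every element of `W_J` moves each index
inside its block, so `y` preserves the order of indices in different blocks; hence the entries
of `Ad(w⁻¹)X` that must vanish for `p_J` are exactly the entries `X (v i) (v j)` with `j < i` in
different blocks. The remaining entries below the diagonal of `Ad(v⁻¹)X` vanish anyway: a
minimal coset representative `v` is increasing on each block (if `v` reversed `k, k + 1` with
`s_k ∈ W_J`, then `v s_k` would be shorter), and `X` is strictly upper triangular.
-/
section SameBlock

variable {n : ℕ}

def SameBlock (J : Set (Fin n)) (i j : Fin (n + 1)) : Prop :=
  ∀ k : Fin n, min i j ≤ k.castSucc → k.succ ≤ max i j → k ∈ J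

theorem inPhiJ_iff_ne_and_sameBlock {J : Set (Fin n)} {i j : Fin (n + 1)} :
    InPhiJ J (i, j) ↔ i ≠ j ∧ SameBlock J i j :=
  Iff.rfl

theorem sameBlock_iff_of_le {J : Set (Fin n)} {i j : Fin (n + 1)} (hij : i ≤ j) :
    SameBlock J i j ↔ ∀ k : Fin n, i ≤ k.castSucc → k.succ ≤ j → k ∈ J := by
  rw [SameBlock, min_eq_left hij, max_eq_right hij]

theorem sameBlock_refl (J : Set (Fin n)) (i : Fin (n + 1)) : SameBlock J i i := by
  intro k h1 h2
  simp only [min_self, max_self, Fin.le_def, Fin.val_castSucc, Fin.val_succ] at h1 h2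
  omega

theorem SameBlock.symm {J : Set (Fin n)} {i j : Fin (n + 1)} (h : SameBlock J i j) :
    SameBlock J j i := by
  simpa only [SameBlock, min_comm, max_comm] using h

theorem SameBlock.trans {J : Set (Fin n)} {i j l : Fin (n + 1)} (hij : SameBlock J i j)
    (hjl : SameBlock J j l) : SameBlock J i l := by
  intro k hk hk'
  simp only [SameBlock, Fin.le_def, Fin.val_castSucc, Fin.val_succ, Fin.coe_min,
    Fin.coe_max] at *
  rcases le_or_gt (j : ℕ) k with hj | hj
  · rcases le_or_gt ((k : ℕ) + 1) l with hl | hl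
    · exact hjl k (by omega) (by omega)
    · exact hij k (by omega) (by omega)
  · rcases le_or_gt (i : ℕ) k with hi | hi
    · exact hij k (by omega) (by omega)
    · exact hjl k (by omega) (by omega)

theorem sameBlock_sgen_apply {J : Set (Fin n)} {k : Fin n} (hk : k ∈ J) (i : Fin (n + 1)) :
    SameBlock J i (sgen k i) := by
  have hsupp : SameBlock J k.castSucc k.succ := by
    refine (sameBlock_iff_of_le (Fin.castSucc_le_succ k)).mpr fun m h1 h2 => ?_
    simp only [Fin.le_def, Fin.val_castSucc, Fin.val_succ] at h1 h2
    rwa [show m = k by omega]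
  unfold sgen
  rcases eq_or_ne i k.castSucc with rfl | h1
  · rw [Equiv.swap_apply_left]; exact hsupp
  rcases eq_or_ne i k.succ with rfl | h2
  · rw [Equiv.swap_apply_right]; exact hsupp.symm
  rw [Equiv.swap_apply_of_ne_of_ne h1 h2]; exact sameBlock_refl J i

theorem sameBlock_apply_of_mem_WJ {J : Set (Fin n)} {y : Equiv.Perm (Fin (n + 1))}
    (hy : y ∈ WJ J) (i : Fin (n + 1)) : SameBlock J i (y i) := by
  induction hy using Subgroup.closure_induction generalizing i with
  | mem x hx =>
    obtain ⟨k, hk, rfl⟩ := hx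
    exact sameBlock_sgen_apply hk i
  | one => exact sameBlock_refl J i
  | mul x z _ _ ihx ihz => exact (ihz i).trans (ihx (z i))
  | inv x _ ihx => simpa using (ihx (x⁻¹ i)).symm

theorem lt_of_lt_of_not_sameBlock {J : Set (Fin n)} {i j i' j' : Fin (n + 1)} (hji : j < i)
    (hij : ¬ SameBlock J i j) (hi : SameBlock J i i') (hj : SameBlock J j j') : j' < i' := by
  simp only [SameBlock, not_forall] at hij
  obtain ⟨k, hk, hk', hkJ⟩ := hij
  simp only [SameBlock, Fin.le_def, Fin.lt_def, Fin.val_castSucc, Fin.val_succ, Fin.coe_min,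
    Fin.coe_max] at *
  have hj' : (j' : ℕ) ≤ k := by
    by_contra h
    exact hkJ (hj k (by omega) (by omega))
  have hi' : (k : ℕ) + 1 ≤ i' := by
    by_contra h
    exact hkJ (hi k (by omega) (by omega))
  omega

end SameBlock

section Length

variable {n : ℕ}

def inversions (u : Equiv.Perm (Fin n)) : Finset (Fin n × Fin n) :=
  Finset.univ.filter fun p => p.1 < p.2 ∧ u p.2 < u p.1

theorem mem_inversions {u : Equiv.Perm (Fin n)} {p : Fin n × Fin n} :
    p ∈ inversions u ↔ p.1 < p.2 ∧ u p.2 < u p.1 := by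
  simp [inversions]

theorem len_eq_card_inversions (u : Equiv.Perm (Fin n)) : len u = (inversions u).card := rfl

theorem sgen_lt_sgen {a : Fin n} {x y : Fin (n + 1)} (hxy : x < y)
    (hne : (x, y) ≠ (a.castSucc, a.succ)) : sgen a x < sgen a y := by
  simp only [ne_eq, Prod.mk.injEq, not_and, Fin.ext_iff, Fin.val_castSucc, Fin.val_succ] at hne
  rw [Fin.lt_def] at hxy ⊢
  unfold sgen
  rw [Equiv.swap_apply_def, Equiv.swap_apply_def]
  split_ifs <;> simp only [Fin.ext_iff, Fin.val_castSucc, Fin.val_succ] at * <;> omega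

theorem len_mul_sgen_lt {v : Equiv.Perm (Fin (n + 1))} {a : Fin n}
    (h : v a.succ < v a.castSucc) : len (v * sgen a) < len v := by
  set s := sgen a
  have hs : ∀ x, s (s x) = x := Equiv.swap_apply_self _ _
  have hmem : (a.castSucc, a.succ) ∈ inversions v := mem_inversions.mpr ⟨Fin.castSucc_lt_succ, h⟩
  have hmaps : Set.MapsTo (Prod.map s s) (inversions (v * s))
      ((inversions v).erase (a.castSucc, a.succ)) := by
    rintro ⟨x, y⟩ hp
    obtain ⟨hxy, hvxy⟩ := mem_inversions.mp hp
    have hne : (x, y) ≠ (a.castSucc, a.succ) := by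
      rintro ⟨⟩
      exact lt_asymm h (by simpa [s, sgen] using hvxy)
    refine Finset.mem_erase.mpr ⟨?_, mem_inversions.mpr ⟨sgen_lt_sgen hxy hne, hvxy⟩⟩
    intro heq
    obtain ⟨hsx, hsy⟩ := Prod.mk.inj heq
    have hx : x = a.succ := by rw [← hs x, hsx]; exact Equiv.swap_apply_left _ _
    have hy : y = a.castSucc := by rw [← hs y, hsy]; exact Equiv.swap_apply_right _ _
    exact lt_asymm hxy (hx ▸ hy ▸ Fin.castSucc_lt_succ)
  rw [len_eq_card_inversions, len_eq_card_inversions]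
  calc (inversions (v * s)).card ≤ ((inversions v).erase (a.castSucc, a.succ)).card :=
        Finset.card_le_card_of_injOn _ hmaps (Equiv.injective (s.prodCongr s)).injOn
    _ < (inversions v).card := Finset.card_erase_lt_of_mem hmem

end Length

namespace IsMinRep

variable {n : ℕ} {J : Set (Fin n)} {v : Equiv.Perm (Fin (n + 1))}

theorem apply_castSucc_lt_apply_succ (hv : IsMinRep J v) {k : Fin n} (hk : k ∈ J) :
    v k.castSucc < v k.succ := by
  have hmem : sgen k ∈ WJ J := Subgroup.subset_closure (Set.mem_image_of_mem _ hk)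
  refine lt_of_le_of_ne (not_lt.mp fun h => ?_) (v.injective.ne Fin.castSucc_lt_succ.ne)
  exact (hv _ hmem).not_gt (len_mul_sgen_lt h)

theorem apply_lt_apply_of_sameBlock (hv : IsMinRep J v) {i j : Fin (n + 1)} (hij : i < j)
    (hb : SameBlock J i j) : v i < v j := by
  induction j using Fin.induction with
  | zero => exact absurd hij (Fin.not_lt_zero i)
  | succ k ih =>
    have hik := Fin.le_castSucc_iff.mpr hij
    rw [sameBlock_iff_of_le hij.le] at hb
    have hkJ : k ∈ J := hb k hik le_rfl
    rcases hik.lt_or_eq with hik | rfl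
    · refine (ih hik ?_).trans (hv.apply_castSucc_lt_apply_succ hkJ)
      exact (sameBlock_iff_of_le hik.le).mpr fun m h1 h2 =>
        hb m h1 (h2.trans (Fin.castSucc_le_succ k))
    · exact hv.apply_castSucc_lt_apply_succ hkJ

end IsMinRep

/-- let `X` be a nilpotent matrix supported on positive roots (strictly
upper triangular), `w = vy` with `v` the minimal-length representative of `wW_J` and
`y ∈ W_J`.  Then `Ad(w⁻¹)X ∈ p_J` iff `Ad(v⁻¹)X ∈ b`.
(For a permutation `u`, `(Ad(u⁻¹)X) i j = X (u i) (u j)`.) -/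
theorem statement6 {n : ℕ} (J : Set (Fin n))
    (X : Matrix (Fin (n + 1)) (Fin (n + 1)) ℂ)
    (hX : ∀ i j : Fin (n + 1), j ≤ i → X i j = 0)
    (v y w : Equiv.Perm (Fin (n + 1)))
    (hv : IsMinRep J v) (hy : y ∈ WJ J) (hw : w = v * y) :
    InParabolic J (Matrix.of fun i j => X (w i) (w j)) ↔
      ∀ i j : Fin (n + 1), j < i → (Matrix.of fun i j => X (v i) (v j)) i j = 0 := by
  subst hw
  simp only [InParabolic, inPhiJ_iff_ne_and_sameBlock, Matrix.of_apply, Equiv.Perm.mul_apply]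
  constructor
  · intro hP i j hji
    by_cases hb : SameBlock J i j
    · exact hX _ _ (hv.apply_lt_apply_of_sameBlock hji hb.symm).le
    · have hi := sameBlock_apply_of_mem_WJ (inv_mem hy) i
      have hj := sameBlock_apply_of_mem_WJ (inv_mem hy) j
      have hlt := lt_of_lt_of_not_sameBlock hji hb hi hj
      have hb' : ¬ SameBlock J (y⁻¹ i) (y⁻¹ j) := fun h => hb ((hi.trans h).trans hj.symm)
      simpa using hP _ _ hlt (fun h => hb' h.2)
  · intro hB i j hji hij
    have hb : ¬ SameBlock J i j := fun h => hij ⟨hji.ne', h⟩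
    exact hB _ _ (lt_of_lt_of_not_sameBlock hji hb (sameBlock_apply_of_mem_WJ hy i)
      (sameBlock_apply_of_mem_WJ hy j))
end

section
/- Let w ∈ S_n have string decomposition w = w_{n−1} ⋯ w_2 w_1 (each w_i = s_{k_i} ⋯ s_i or the identity). Then, for any fixed index i with 1 ≤ i ≤ n−1, the simple root α_i lies in the inversion set N(w) if and only if ℓ(w_i) > ℓ(w_{i−1}), where ℓ(w_0) is taken to be 0 by convention. Equivalently, w(i) > w(i+1) if and only if ℓ(w_i) > ℓ(w_{i−1}). -/
/-- The simple reflection `s_j` (`0`-indexed) in `S_{n+1}`, or the identity if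
`j` is out of range. -/
def sN {n : ℕ} (j : ℕ) : Equiv.Perm (Fin (n + 1)) :=
  if h : j + 1 ≤ n then
    Equiv.swap ⟨j, by omega⟩ ⟨j + 1, by omega⟩
  else 1

/-- The string `w_i = s_{i+1-ℓ} s_{i+2-ℓ} ⋯ s_i` of length `ℓ` ending at the simple
reflection `s_i` (the identity when `ℓ = 0`). -/
def wstring {n : ℕ} (i ℓ : ℕ) : Equiv.Perm (Fin (n + 1)) :=
  ((List.range' (i + 1 - ℓ) ℓ).map (sN (n := n))).prod

/-- The product `w_{n-1} w_{n-2} ⋯ w_1 w_0` of the strings encoded by the length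
function `f` (`f i = ℓ(w_i)`). -/
def strProd {n : ℕ} (f : Fin n → ℕ) : Equiv.Perm (Fin (n + 1)) :=
  ((List.finRange n).reverse.map fun i => wstring (n := n) i.val (f i)).prod

/-! The string `w_j` of length `ℓ` is the cycle sending `j + 1` to `j + 1 - ℓ` and shifting
`j + 1 - ℓ, …, j` up by one; in particular it is strictly increasing on `{0, …, j}`. Hence
in `w = w_{n-1} ⋯ w_0` the relative order of the values at `i` and `i + 1` is decided by
`w_i w_{i-1} ⋯ w_0` and kept by all later strings. Now `w_{i-1} ⋯ w_0` fixes `i + 1` and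
sends `i` to `i - ℓ(w_{i-1})`, and `w_i` sends `i + 1` to `i + 1 - ℓ(w_i)` while shifting
`i - ℓ(w_{i-1})` up exactly when `ℓ(w_{i-1}) < ℓ(w_i)`. -/

/-- The action of `wstring j ℓ` on values. -/
def strAct (j ℓ x : ℕ) : ℕ :=
  if x = j + 1 then j + 1 - ℓ else if j + 1 - ℓ ≤ x ∧ x ≤ j then x + 1 else x

/-- `strComp g m` is the action of `w_{m-1} ⋯ w_0` on values, where `ℓ(w_j) = g j`. -/
def strComp (g : ℕ → ℕ) : ℕ → ℕ → ℕ
  | 0 => id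
  | m + 1 => strAct m (g m) ∘ strComp g m

section strAct

variable {j ℓ x y : ℕ}

theorem strAct_of_lt (h : j + 1 < x) : strAct j ℓ x = x := by
  unfold strAct; split_ifs <;> omega

theorem strAct_le (h : x ≤ j + 1) : strAct j ℓ x ≤ j + 1 := by
  unfold strAct; split_ifs <;> omega

theorem strAct_lt_strAct_iff (hx : x ≤ j) (hy : y ≤ j) :
    strAct j ℓ x < strAct j ℓ y ↔ x < y := by
  unfold strAct; split_ifs <;> omega

end strAct

section strComp

variable (g : ℕ → ℕ)

theorem strComp_of_lt {m x : ℕ} (h : m < x) : strComp g m x = x := by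
  induction m with
  | zero => rfl
  | succ m ih =>
    rw [strComp, Function.comp_apply, ih (by omega), strAct_of_lt (by omega)]

theorem strComp_le {m x : ℕ} (h : x ≤ m) : strComp g m x ≤ m := by
  induction m with
  | zero => exact h
  | succ m ih =>
    rw [strComp, Function.comp_apply]
    apply strAct_le
    rcases Nat.lt_or_ge m x with hmx | hxm
    · rw [strComp_of_lt g hmx]; exact h
    · exact (ih hxm).trans m.le_succ

theorem strComp_lt_strComp_iff {m m' x y : ℕ} (hm : m ≤ m') (hx : x ≤ m) (hy : y ≤ m) :
    strComp g m' x < strComp g m' y ↔ strComp g m x < strComp g m y := by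
  induction m', hm using Nat.le_induction with
  | base => rfl
  | succ m' hm ih =>
    rw [strComp, Function.comp_apply, Function.comp_apply,
      strAct_lt_strAct_iff (strComp_le g (hx.trans hm)) (strComp_le g (hy.trans hm)), ih]

theorem strComp_succ_self (k : ℕ) : strComp g (k + 1) (k + 1) = k + 1 - g k := by
  rw [strComp, Function.comp_apply, strComp_of_lt g k.lt_succ_self, strAct, if_pos rfl]

theorem strComp_succ_lt_strComp_iff {i m : ℕ} (him : i < m) :
    strComp g m (i + 1) < strComp g m i ↔ i - strComp g i i < g i := by
  have hprev : strComp g i i ≤ i := strComp_le g le_rfl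
  rw [strComp_lt_strComp_iff g him le_rfl i.le_succ, strComp, Function.comp_apply,
    Function.comp_apply, strComp_of_lt g i.lt_succ_self, strAct, strAct]
  split_ifs <;> omega

theorem sub_strComp_self (hg : ∀ j, g j ≤ j + 1) (i : ℕ) :
    i - strComp g i i = if 0 < i then g (i - 1) else 0 := by
  cases i with
  | zero => rfl
  | succ k =>
    rw [strComp_succ_self, if_pos k.succ_pos, Nat.add_sub_cancel]
    have := hg k
    omega

end strComp

theorem sN_val_apply {n k : ℕ} (hk : k + 1 ≤ n) (x : Fin (n + 1)) :
    (sN (n := n) k x).val = if x.val = k then k + 1 else if x.val = k + 1 then k else x.val := by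
  rw [sN, dif_pos hk, Equiv.swap_apply_def]
  split_ifs <;> simp_all [Fin.ext_iff]

theorem wstring_val_apply {n j ℓ : ℕ} (hj : j + 1 ≤ n) (hℓ : ℓ ≤ j + 1) (x : Fin (n + 1)) :
    (wstring (n := n) j ℓ x).val = strAct j ℓ x.val := by
  induction ℓ with
  | zero =>
    simp only [wstring, List.range'_zero, List.map_nil, List.prod_nil, Equiv.Perm.one_apply,
      strAct]
    split_ifs <;> omega
  | succ ℓ ih =>
    have hsplit : wstring (n := n) j (ℓ + 1) = sN (j - ℓ) * wstring (n := n) j ℓ := by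
      rw [wstring, show j + 1 - (ℓ + 1) = j - ℓ by omega, List.range'_succ,
        show j - ℓ + 1 = j + 1 - ℓ by omega, List.map_cons, List.prod_cons, wstring]
    rw [hsplit, Equiv.Perm.mul_apply, sN_val_apply (by omega), ih (by omega), strAct, strAct]
    split_ifs <;> omega

theorem strProd_eq_prod_range {n : ℕ} (f : Fin n → ℕ) :
    strProd f = ((List.range n).reverse.map fun j =>
      wstring (n := n) j (if h : j < n then f ⟨j, h⟩ else 0)).prod := by
  rw [strProd, ← List.map_coe_finRange_eq_range, ← List.map_reverse, List.map_map]
  congr 2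
  funext i
  simp

theorem strProd_val_apply {n : ℕ} (f : Fin n → ℕ) (hf : ∀ i, f i ≤ i.val + 1)
    (x : Fin (n + 1)) :
    (strProd f x).val = strComp (fun j => if h : j < n then f ⟨j, h⟩ else 0) n x.val := by
  set g : ℕ → ℕ := fun j => if h : j < n then f ⟨j, h⟩ else 0
  suffices ∀ m ≤ n, (((List.range m).reverse.map fun j => wstring (n := n) j (g j)).prod x).val
      = strComp g m x.val from strProd_eq_prod_range f ▸ this n le_rfl
  intro m hm
  induction m with
  | zero => rfl
  | succ m ih =>
    have hgm : g m ≤ m + 1 := by simpa only [g, dif_pos (show m < n from hm)] using hf ⟨m, hm⟩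
    rw [List.range_succ, List.reverse_append, List.reverse_singleton, List.singleton_append,
      List.map_cons, List.prod_cons, Equiv.Perm.mul_apply, wstring_val_apply hm hgm, ih (by omega),
      strComp, Function.comp_apply]

/-- if `w = w_{n-1} ⋯ w_0` is the string decomposition of `w` (with
`f i = ℓ(w_i)`), then for any index `i` the simple root `α_i` lies in `N(w)` iff
`ℓ(w_i) > ℓ(w_{i-1})` (with `ℓ(w_{-1}) = 0`); equivalently, `w(i) > w(i+1)` iff
`ℓ(w_i) > ℓ(w_{i-1})`. -/
theorem statement11 {n : ℕ} (w : Equiv.Perm (Fin (n + 1))) (f : Fin n → ℕ)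
    (hf : ∀ i, f i ≤ i.val + 1) (hw : w = strProd f) (i : Fin n) :
    ((i.castSucc, i.succ) ∈ invSet w ↔
      (if h : 0 < i.val then f ⟨i.val - 1, Nat.lt_of_le_of_lt (Nat.sub_le _ _) i.isLt⟩
        else 0) < f i) ∧
    (w i.succ < w i.castSucc ↔
      (if h : 0 < i.val then f ⟨i.val - 1, Nat.lt_of_le_of_lt (Nat.sub_le _ _) i.isLt⟩
        else 0) < f i) := by
  set g : ℕ → ℕ := fun j => if h : j < n then f ⟨j, h⟩ else 0
  have hg : ∀ j, g j ≤ j + 1 := fun j => by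
    by_cases hj : j < n
    · simpa only [g, dif_pos hj] using hf ⟨j, hj⟩
    · simp only [g, dif_neg hj]; omega
  have hdescent : w i.succ < w i.castSucc ↔
      (if h : 0 < i.val then f ⟨i.val - 1, Nat.lt_of_le_of_lt (Nat.sub_le _ _) i.isLt⟩
        else 0) < f i := by
    rw [hw, Fin.lt_def, strProd_val_apply f hf, strProd_val_apply f hf, Fin.val_succ,
      Fin.val_castSucc, strComp_succ_lt_strComp_iff g i.isLt, sub_strComp_self g hg]
    simp [g, show i.val - 1 < n by omega]
  exact ⟨and_iff_right Fin.castSucc_lt_succ |>.trans hdescent, hdescent⟩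
end

section
/- Let X ∈ gl_n(ℂ) be the highest-form nilpotent matrix associated to a partition λ of n via the base filling (X_{kj} = 1 if j fills the box directly to the right of k in the base filling of λ, and 0 otherwise). Let 𝒱 be the span of the elementary matrices E_{ij} such that i < j, j fills a box in a column of the base filling strictly to the right of the column of i, and the root of E_{ij} is strictly greater than some root in the support of X. Then the linear map ad_X: u → 𝒱 sending Y ↦ [Y, X] from the strictly upper triangular matrices u onto 𝒱 is surjective. -/
open scoped Classical

/-- The (0-indexed) label of the box `(r, c)` of `μ` under the base filling: columns are
filled bottom-to-top, proceeding through the columns left to right. -/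
def baseLabel (μ : YoungDiagram) (r c : ℕ) : ℕ :=
  (∑ c' ∈ Finset.range c, μ.colLen c') + (μ.colLen c - 1 - r)

/-- The highest-form nilpotent matrix of Jordan type `μ`: `X k j = 1` exactly when `j`
fills the box directly to the right of the box filled by `k` in the base filling. -/
noncomputable def baseX (μ : YoungDiagram) (n : ℕ) : Matrix (Fin n) (Fin n) ℂ :=
  Matrix.of fun k j =>
    if ∃ r c, (r, c) ∈ μ ∧ (r, c + 1) ∈ μ ∧
        baseLabel μ r c = k.val ∧ baseLabel μ r (c + 1) = j.val then 1 else 0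

/-- The index set `Φ(𝒱)`: positive roots `(i, j)` (so `i < j`) such that `j` fills a box
in a column of the base filling strictly to the right of the column of `i`, and the
root `ε_i - ε_j` is strictly greater than some root in the support of `X`
(`(i,j) ≥ (a,b)` iff `i ≤ a` and `b ≤ j`). -/
def inPhiV (μ : YoungDiagram) (n : ℕ) (i j : Fin n) : Prop :=
  i < j ∧
  (∃ r c r' c', (r, c) ∈ μ ∧ (r', c') ∈ μ ∧
      baseLabel μ r c = i.val ∧ baseLabel μ r' c' = j.val ∧ c < c') ∧
  (∃ a b : Fin n, baseX μ n a b ≠ 0 ∧ i ≤ a ∧ b ≤ j ∧ ¬(i = a ∧ j = b))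

namespace S13

def S (μ : YoungDiagram) (c : ℕ) : ℕ := ∑ c' ∈ Finset.range c, μ.colLen c'

lemma baseLabel_def (μ : YoungDiagram) (r c : ℕ) :
    baseLabel μ r c = S μ c + (μ.colLen c - 1 - r) := rfl

lemma S_succ (μ : YoungDiagram) (c : ℕ) : S μ (c+1) = S μ c + μ.colLen c :=
  Finset.sum_range_succ _ _

lemma S_mono (μ : YoungDiagram) : Monotone (S μ) := fun _ _ h =>
  Finset.sum_le_sum_of_subset (Finset.range_subset_range.2 h)

lemma label_ge (μ : YoungDiagram) (r c : ℕ) : S μ c ≤ baseLabel μ r c :=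
  Nat.le_add_right _ _

lemma label_lt (μ : YoungDiagram) {r c : ℕ} (h : (r, c) ∈ μ) :
    baseLabel μ r c < S μ (c+1) := by
  have hr : r < μ.colLen c := YoungDiagram.mem_iff_lt_colLen.mp h
  rw [baseLabel_def, S_succ]; omega

lemma card_eq_S (μ : YoungDiagram) {M : ℕ} (hM : μ.rowLen 0 ≤ M) : μ.card = S μ M := by
  have hcells : μ.cells = (Finset.range M).biUnion μ.col := by
    ext ⟨r, c⟩
    simp only [Finset.mem_biUnion, Finset.mem_range, YoungDiagram.mem_col_iff,
      YoungDiagram.mem_cells]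
    constructor
    · intro h
      refine ⟨c, ?_, h, rfl⟩
      have h0 : (0, c) ∈ μ := μ.up_left_mem (Nat.zero_le r) le_rfl h
      have := YoungDiagram.mem_iff_lt_rowLen.mp h0
      omega
    · rintro ⟨j, _, h, rfl⟩; exact h
  have hdisj : ∀ x ∈ Finset.range M, ∀ y ∈ Finset.range M, x ≠ y →
      Disjoint (μ.col x) (μ.col y) := by
    intro x _ y _ hxy
    refine Finset.disjoint_left.mpr ?_
    intro p hp hq
    rw [YoungDiagram.mem_col_iff] at hp hq
    exact hxy (hp.2 ▸ hq.2)
  have : μ.card = ∑ c ∈ Finset.range M, (μ.col c).card := by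
    rw [show μ.card = μ.cells.card from rfl, hcells, Finset.card_biUnion hdisj]
  rw [this]
  unfold S
  refine Finset.sum_congr rfl fun c _ => ?_
  exact (μ.colLen_eq_card).symm

lemma label_lt_card (μ : YoungDiagram) {r c : ℕ} (h : (r, c) ∈ μ) :
    baseLabel μ r c < μ.card := by
  have h0 : (0, c) ∈ μ := μ.up_left_mem (Nat.zero_le r) le_rfl h
  have hc : c < μ.rowLen 0 := YoungDiagram.mem_iff_lt_rowLen.mp h0
  calc baseLabel μ r c < S μ (c+1) := label_lt μ h
    _ ≤ S μ (μ.rowLen 0) := S_mono μ hc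
    _ = μ.card := (card_eq_S μ le_rfl).symm

lemma label_lt_of (μ : YoungDiagram) {r c r' c' : ℕ} (h : (r, c) ∈ μ) (h' : (r', c') ∈ μ)
    (hcc : c < c' ∨ (c = c' ∧ r' < r)) : baseLabel μ r c < baseLabel μ r' c' := by
  rcases hcc with hlt | ⟨rfl, hr⟩
  · calc baseLabel μ r c < S μ (c+1) := label_lt μ h
      _ ≤ S μ c' := S_mono μ hlt
      _ ≤ _ := label_ge μ r' c'
  · have h1 : r < μ.colLen c := YoungDiagram.mem_iff_lt_colLen.mp h
    rw [baseLabel_def, baseLabel_def]; omega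

lemma label_cmp (μ : YoungDiagram) {r c r' c' : ℕ} (h : (r, c) ∈ μ) (h' : (r', c') ∈ μ)
    (hlt : baseLabel μ r c < baseLabel μ r' c') : c < c' ∨ (c = c' ∧ r' < r) := by
  rcases Nat.lt_trichotomy c c' with hc | rfl | hc
  · exact Or.inl hc
  · rcases Nat.lt_trichotomy r r' with hr | rfl | hr
    · exact absurd (label_lt_of μ h' h (Or.inr ⟨rfl, hr⟩)) (by omega)
    · exact absurd hlt (by omega)
    · exact Or.inr ⟨rfl, hr⟩
  · exact absurd (label_lt_of μ h' h (Or.inl hc)) (by omega)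

lemma label_inj (μ : YoungDiagram) {r c r' c' : ℕ} (h : (r, c) ∈ μ) (h' : (r', c') ∈ μ)
    (he : baseLabel μ r c = baseLabel μ r' c') : r = r' ∧ c = c' := by
  rcases Nat.lt_trichotomy c c' with hc | rfl | hc
  · exact absurd (label_lt_of μ h h' (Or.inl hc)) (by omega)
  · rcases Nat.lt_trichotomy r r' with hr | rfl | hr
    · exact absurd (label_lt_of μ h' h (Or.inr ⟨rfl, hr⟩)) (by omega)
    · exact ⟨rfl, rfl⟩
    · exact absurd (label_lt_of μ h h' (Or.inr ⟨rfl, hr⟩)) (by omega)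
  · exact absurd (label_lt_of μ h' h (Or.inl hc)) (by omega)

lemma label_surj (μ : YoungDiagram) {m : ℕ} (hm : m < μ.card) :
    ∃ r c, (r, c) ∈ μ ∧ baseLabel μ r c = m := by
  have hM : m < S μ (μ.rowLen 0) := by rw [← card_eq_S μ le_rfl]; exact hm
  have hex : ∃ c, m < S μ (c+1) := by
    rcases Nat.eq_zero_or_pos (μ.rowLen 0) with h0 | h0
    · rw [h0] at hM
      exact absurd hM (by simp [S])
    · exact ⟨μ.rowLen 0 - 1, by rwa [show μ.rowLen 0 - 1 + 1 = μ.rowLen 0 by omega]⟩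
  set c := Nat.find hex with hcdef
  have hc1 : m < S μ (c+1) := Nat.find_spec hex
  have hc0 : S μ c ≤ m := by
    rcases Nat.eq_zero_or_pos c with h | h
    · rw [h]; simp [S]
    · have hmin := Nat.find_min hex (show c - 1 < c by omega)
      rw [show c - 1 + 1 = c by omega] at hmin
      omega
  have hlen : m - S μ c < μ.colLen c := by rw [S_succ] at hc1; omega
  refine ⟨μ.colLen c - 1 - (m - S μ c), c, ?_, ?_⟩
  · exact YoungDiagram.mem_iff_lt_colLen.mpr (by omega)
  · rw [baseLabel_def]; omega

def hasR (μ : YoungDiagram) (i : ℕ) : Prop :=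
  ∃ r c, (r, c) ∈ μ ∧ (r, c + 1) ∈ μ ∧ baseLabel μ r c = i

noncomputable def Rn (μ : YoungDiagram) (i : ℕ) : ℕ :=
  if h : hasR μ i then baseLabel μ h.choose (h.choose_spec.choose + 1) else 0

lemma Rn_eq (μ : YoungDiagram) {r c i : ℕ} (h1 : (r, c) ∈ μ) (h2 : (r, c + 1) ∈ μ)
    (h3 : baseLabel μ r c = i) : Rn μ i = baseLabel μ r (c + 1) := by
  have h : hasR μ i := ⟨r, c, h1, h2, h3⟩
  rw [Rn, dif_pos h]
  obtain ⟨hh1, hh2, hh3⟩ := h.choose_spec.choose_spec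
  obtain ⟨hr, hc⟩ := label_inj μ hh1 h1 (hh3.trans h3.symm)
  exact congrArg₂ (fun a b => baseLabel μ a (b + 1)) hr hc

lemma lt_Rn (μ : YoungDiagram) {i : ℕ} (h : hasR μ i) : i < Rn μ i := by
  obtain ⟨r, c, h1, h2, h3⟩ := h
  rw [Rn_eq μ h1 h2 h3, ← h3]
  exact label_lt_of μ h1 h2 (Or.inl (Nat.lt_succ_self c))

lemma Rn_lt_card (μ : YoungDiagram) {i : ℕ} (h : hasR μ i) : Rn μ i < μ.card := by
  obtain ⟨r, c, h1, h2, h3⟩ := h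
  rw [Rn_eq μ h1 h2 h3]
  exact label_lt_card μ h2

lemma S1_le_Rn (μ : YoungDiagram) {i : ℕ} (h : hasR μ i) : S μ 1 ≤ Rn μ i := by
  obtain ⟨r, c, h1, h2, h3⟩ := h
  rw [Rn_eq μ h1 h2 h3]
  exact le_trans (S_mono μ (by omega)) (label_ge μ r (c+1))

lemma Rn_lt_Rn (μ : YoungDiagram) {k i : ℕ} (hk : hasR μ k) (hi : hasR μ i) (h : k < i) :
    Rn μ k < Rn μ i := by
  obtain ⟨r, c, h1, h2, h3⟩ := hk
  obtain ⟨r', c', h1', h2', h3'⟩ := hi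
  rw [Rn_eq μ h1 h2 h3, Rn_eq μ h1' h2' h3']
  have hcmp := label_cmp μ h1 h1' (by rw [h3, h3']; exact h)
  apply label_lt_of μ h2 h2'
  rcases hcmp with h | ⟨rfl, hr⟩
  · exact Or.inl (by omega)
  · exact Or.inr ⟨rfl, hr⟩

lemma Rn_mono (μ : YoungDiagram) {k i : ℕ} (hk : hasR μ k) (hi : hasR μ i) (h : k ≤ i) :
    Rn μ k ≤ Rn μ i := by
  rcases Nat.eq_or_lt_of_le h with rfl | h
  · exact le_rfl
  · exact (Rn_lt_Rn μ hk hi h).le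

noncomputable def g (μ : YoungDiagram) (n : ℕ) (Z : Matrix (Fin n) (Fin n) ℂ) :
    ℕ → Fin n → Fin n → ℂ
  | 0, _, _ => 0
  | f + 1, i, k =>
    if h : hasR μ k.val ∧ Rn μ k.val < n then
      Z i ⟨Rn μ k.val, h.2⟩ +
        (if h2 : hasR μ i.val ∧ Rn μ i.val < n then
          g μ n Z f ⟨Rn μ i.val, h2.2⟩ ⟨Rn μ k.val, h.2⟩ else 0)
    else 0

lemma g_succ (μ : YoungDiagram) (n : ℕ) (Z : Matrix (Fin n) (Fin n) ℂ) :
    ∀ (f : ℕ) (i k : Fin n), n - i.val ≤ f → g μ n Z f i k = g μ n Z (f + 1) i k := by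
  intro f
  induction f with
  | zero => intro i k h; exact absurd h (by have := i.isLt; omega)
  | succ f ih =>
    intro i k h
    show g μ n Z (f + 1) i k = g μ n Z (f + 2) i k
    simp only [g]
    by_cases hk : hasR μ k.val ∧ Rn μ k.val < n
    · rw [dif_pos hk, dif_pos hk]
      congr 1
      by_cases hi : hasR μ i.val ∧ Rn μ i.val < n
      · rw [dif_pos hi, dif_pos hi]
        exact ih _ _ (by have := lt_Rn μ hi.1; simp only []; omega)
      · rw [dif_neg hi, dif_neg hi]
    · rw [dif_neg hk, dif_neg hk]

lemma g_stable (μ : YoungDiagram) (n : ℕ) (Z : Matrix (Fin n) (Fin n) ℂ)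
    (f f' : ℕ) (i k : Fin n) (hf : n - i.val ≤ f) (hf' : n - i.val ≤ f') :
    g μ n Z f i k = g μ n Z f' i k := by
  have key : ∀ (d b : ℕ), n - i.val ≤ b → g μ n Z b i k = g μ n Z (b + d) i k := by
    intro d
    induction d with
    | zero => intro b _; rfl
    | succ d ih =>
      intro b hb
      rw [ih b hb, show b + (d+1) = (b+d) + 1 by omega]
      exact g_succ μ n Z (b + d) i k (by omega)
  obtain ⟨d, rfl⟩ := Nat.exists_eq_add_of_le hf
  obtain ⟨d', rfl⟩ := Nat.exists_eq_add_of_le hf'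
  rw [← key d _ le_rfl, ← key d' _ le_rfl]

lemma Y_unfold (μ : YoungDiagram) (n : ℕ) (Z : Matrix (Fin n) (Fin n) ℂ) (i k : Fin n) :
    g μ n Z n i k =
      if h : hasR μ k.val ∧ Rn μ k.val < n then
        Z i ⟨Rn μ k.val, h.2⟩ +
          (if h2 : hasR μ i.val ∧ Rn μ i.val < n then
            g μ n Z n ⟨Rn μ i.val, h2.2⟩ ⟨Rn μ k.val, h.2⟩ else 0)
      else 0 := by
  have hn0 : 0 < n := i.pos
  have e1 : g μ n Z n i k = g μ n Z (n - 1 + 1) i k := by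
    rw [show n - 1 + 1 = n by omega]
  rw [e1]
  simp only [g]
  by_cases hk : hasR μ k.val ∧ Rn μ k.val < n
  · rw [dif_pos hk, dif_pos hk]
    congr 1
    by_cases hi : hasR μ i.val ∧ Rn μ i.val < n
    · rw [dif_pos hi, dif_pos hi]
      exact g_stable μ n Z (n - 1) n _ _
        (by have := lt_Rn μ hi.1; simp only []; omega) (by omega)
    · rw [dif_neg hi, dif_neg hi]
  · rw [dif_neg hk, dif_neg hk]

lemma baseX_eq_one (μ : YoungDiagram) (n : ℕ) {k j : Fin n}
    (h : ∃ r c, (r, c) ∈ μ ∧ (r, c + 1) ∈ μ ∧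
      baseLabel μ r c = k.val ∧ baseLabel μ r (c + 1) = j.val) : baseX μ n k j = 1 := by
  simp only [baseX, Matrix.of_apply]
  exact if_pos h

lemma baseX_eq_zero (μ : YoungDiagram) (n : ℕ) {k j : Fin n}
    (h : ¬ ∃ r c, (r, c) ∈ μ ∧ (r, c + 1) ∈ μ ∧
      baseLabel μ r c = k.val ∧ baseLabel μ r (c + 1) = j.val) : baseX μ n k j = 0 := by
  simp only [baseX, Matrix.of_apply]
  exact if_neg h

lemma baseX_exists (μ : YoungDiagram) (n : ℕ) {k j : Fin n} (h : baseX μ n k j ≠ 0) :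
    ∃ r c, (r, c) ∈ μ ∧ (r, c + 1) ∈ μ ∧
      baseLabel μ r c = k.val ∧ baseLabel μ r (c + 1) = j.val := by
  by_contra hP
  exact h (baseX_eq_zero μ n hP)

lemma not_inPhiV (μ : YoungDiagram) (n : ℕ) (hn : μ.card = n) (i k : Fin n) (hki : k ≤ i)
    (hk : hasR μ k.val) (hR : Rn μ k.val < n) : ¬ inPhiV μ n i ⟨Rn μ k.val, hR⟩ := by
  rintro ⟨-, -, a, b, hX, hia, hbj, hne⟩
  obtain ⟨r, c, h1, h2, h3, h4⟩ := baseX_exists μ n hX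
  have ha : hasR μ a.val := ⟨r, c, h1, h2, h3⟩
  have hRa : Rn μ a.val = b.val := by rw [Rn_eq μ h1 h2 h3]; exact h4
  have h5 : Rn μ k.val ≤ Rn μ a.val := Rn_mono μ hk ha (le_trans hki hia)
  have h6 : b.val ≤ Rn μ k.val := hbj
  have hka : k.val = a.val := by
    by_contra hne2
    have : k.val < a.val := lt_of_le_of_ne (le_trans hki hia) hne2
    have := Rn_lt_Rn μ hk ha this
    omega
  have hia2 : i = a := Fin.ext (le_antisymm (by omega : i.val ≤ a.val) (hka ▸ hki))
  exact hne ⟨hia2, Fin.ext (by omega : Rn μ k.val = b.val)⟩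

lemma Y_tri (μ : YoungDiagram) (n : ℕ) (hn : μ.card = n) (Z : Matrix (Fin n) (Fin n) ℂ)
    (hZ : ∀ i j : Fin n, ¬ inPhiV μ n i j → Z i j = 0) :
    ∀ (m : ℕ) (i k : Fin n), n - i.val ≤ m → k ≤ i → g μ n Z n i k = 0 := by
  intro m
  induction m with
  | zero => intro i k h _; exact absurd h (by have := i.isLt; omega)
  | succ m ih =>
    intro i k hm hki
    rw [Y_unfold]
    by_cases hk : hasR μ k.val ∧ Rn μ k.val < n
    · rw [dif_pos hk, hZ _ _ (not_inPhiV μ n hn i k hki hk.1 hk.2)]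
      by_cases hi : hasR μ i.val ∧ Rn μ i.val < n
      · rw [dif_pos hi]
        have h1 : Rn μ k.val ≤ Rn μ i.val := Rn_mono μ hk.1 hi.1 hki
        have h2 : i.val < Rn μ i.val := lt_Rn μ hi.1
        rw [ih ⟨Rn μ i.val, hi.2⟩ ⟨Rn μ k.val, hk.2⟩ (by simp only []; omega) h1]
        ring
      · rw [dif_neg hi]; ring
    · rw [dif_neg hk]

end S13

open S13 in
/-- for the highest-form nilpotent `X` associated to a partition `μ` of
`n` via the base filling, the map `ad_X : u → 𝒱`, `Y ↦ [Y, X] = YX - XY`, from the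
strictly upper triangular matrices onto `𝒱 = span{E_γ : γ ∈ Φ(𝒱)}` is surjective. -/
theorem statement13 (μ : YoungDiagram) (n : ℕ) (hn : μ.card = n)
    (Z : Matrix (Fin n) (Fin n) ℂ)
    (hZ : ∀ i j : Fin n, ¬ inPhiV μ n i j → Z i j = 0) :
    ∃ Y : Matrix (Fin n) (Fin n) ℂ,
      (∀ i j : Fin n, j ≤ i → Y i j = 0) ∧
      Y * baseX μ n - baseX μ n * Y = Z := by
  refine ⟨Matrix.of (fun i k => g μ n Z n i k), ?_, ?_⟩
  · intro i j hji
    exact Y_tri μ n hn Z hZ n i j (by omega) hji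
  · have hXY : ∀ i j : Fin n, (baseX μ n * Matrix.of (fun i k => g μ n Z n i k)) i j =
        (if h2 : hasR μ i.val ∧ Rn μ i.val < n then g μ n Z n ⟨Rn μ i.val, h2.2⟩ j else 0) := by
      intro i j
      by_cases hi : hasR μ i.val ∧ Rn μ i.val < n
      · rw [dif_pos hi, Matrix.mul_apply]
        obtain ⟨r, c, h1, h2c, h3⟩ := hi.1
        rw [Finset.sum_eq_single (⟨Rn μ i.val, hi.2⟩ : Fin n)]
        · rw [baseX_eq_one μ n ⟨r, c, h1, h2c, h3, (Rn_eq μ h1 h2c h3).symm⟩, one_mul,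
            Matrix.of_apply]
        · intro b _ hb
          rw [baseX_eq_zero μ n, zero_mul]
          rintro ⟨r', c', h1', h2', h3', h4'⟩
          obtain ⟨hr, hc⟩ := label_inj μ h1' h1 (h3'.trans h3.symm)
          subst hr; subst hc
          exact hb (Fin.ext (show (b : ℕ) = Rn μ i.val by rw [← h4', Rn_eq μ h1 h2c h3]))
        · intro h; exact absurd (Finset.mem_univ _) h
      · rw [dif_neg hi, Matrix.mul_apply]
        apply Finset.sum_eq_zero
        intro b _
        rw [baseX_eq_zero μ n, zero_mul]
        rintro ⟨r, c, h1, h2c, h3, h4⟩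
        apply hi
        refine ⟨⟨r, c, h1, h2c, h3⟩, ?_⟩
        rw [Rn_eq μ h1 h2c h3, h4]
        exact b.isLt
    ext i j
    rw [Matrix.sub_apply]
    by_cases hL : ∃ r c, (r, c) ∈ μ ∧ (r, c + 1) ∈ μ ∧ baseLabel μ r (c + 1) = j.val
    · obtain ⟨r, c, h1, h2, h3⟩ := hL
      have hk0lt : baseLabel μ r c < n := hn ▸ label_lt_card μ h1
      have hYX : (Matrix.of (fun i k => g μ n Z n i k) * baseX μ n) i j =
          g μ n Z n i ⟨baseLabel μ r c, hk0lt⟩ := by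
        rw [Matrix.mul_apply, Finset.sum_eq_single (⟨baseLabel μ r c, hk0lt⟩ : Fin n)]
        · rw [baseX_eq_one μ n ⟨r, c, h1, h2, rfl, h3⟩, mul_one, Matrix.of_apply]
        · intro b _ hb
          rw [baseX_eq_zero μ n, mul_zero]
          rintro ⟨r', c', h1', h2', h3', h4'⟩
          obtain ⟨hr, hc⟩ := label_inj μ h2' h2 (h4'.trans h3.symm)
          have hc' : c' = c := by omega
          subst hr; subst hc'
          exact hb (Fin.ext h3'.symm)
        · intro h; exact absurd (Finset.mem_univ _) h
      have hRk0 : Rn μ (baseLabel μ r c) = j.val := by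
        rw [Rn_eq μ h1 h2 rfl]; exact h3
      have hhk : hasR μ (baseLabel μ r c) ∧ Rn μ (baseLabel μ r c) < n :=
        ⟨⟨r, c, h1, h2, rfl⟩, by rw [hRk0]; exact j.isLt⟩
      have hfin : (⟨Rn μ (baseLabel μ r c), hhk.2⟩ : Fin n) = j := Fin.ext hRk0
      rw [hYX, hXY, Y_unfold, dif_pos hhk, hfin]
      ring
    · have hYX : (Matrix.of (fun i k => g μ n Z n i k) * baseX μ n) i j = 0 := by
        rw [Matrix.mul_apply]
        apply Finset.sum_eq_zero
        intro b _
        rw [baseX_eq_zero μ n, mul_zero]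
        rintro ⟨r', c', h1', h2', h3', h4'⟩
        exact hL ⟨r', c', h1', h2', h4'⟩
      obtain ⟨r', c', hj1, hj2⟩ := label_surj μ (show j.val < μ.card by rw [hn]; exact j.isLt)
      have hc0 : c' = 0 := by
        by_contra hc
        have hle : (r', c' - 1) ∈ μ := by
          rw [YoungDiagram.mem_iff_lt_colLen]
          have := YoungDiagram.mem_iff_lt_colLen.mp hj1
          have := μ.colLen_anti (c' - 1) c' (by omega)
          omega
        refine hL ⟨r', c' - 1, hle, ?_, ?_⟩ <;> rw [show c' - 1 + 1 = c' by omega]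
        · exact hj1
        · exact hj2
      subst hc0
      have hZ0 : Z i j = 0 := by
        apply hZ
        rintro ⟨-, ⟨r2, c2, r2', c2', hb1, hb2, hb3, hb4, hcc⟩, -⟩
        obtain ⟨hr, hc⟩ := label_inj μ hb2 hj1 (hb4.trans hj2.symm)
        omega
      rw [hYX, hXY, hZ0]
      by_cases hi : hasR μ i.val ∧ Rn μ i.val < n
      · rw [dif_pos hi]
        have hjlt : j.val < Rn μ i.val := by
          have hlt : baseLabel μ r' 0 < S μ 1 := label_lt μ hj1
          have := S1_le_Rn μ hi.1
          omega
        rw [Y_tri μ n hn Z hZ n ⟨Rn μ i.val, hi.2⟩ j (by omega) (le_of_lt hjlt)]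
        ring
      · rw [dif_neg hi]; ring
end

section
/- Let T be a row-strict tableau of partition shape λ ⊢ n (entries 1,…,n each used once, increasing left to right in each row). For 2 ≤ q ≤ n let T[q] denote the restriction of T to boxes labeled 1,…,q, and let ℓ_{q−1}(T) be the number of rows of T[q] strictly above the row containing q and of the same length as that row, plus the number of rows of T[q] of strictly greater length than the row containing q. Fix a simple reflection index i with 1 ≤ i ≤ n−1, and let w ∈ S_n be the permutation such that w(j) is the base-filling label of the box containing j in T. Then w(i) < w(i+1) if and only if ℓ_i(T) ≤ ℓ_{i−1}(T) (with ℓ_0 = 0). -/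
/-- The length of row `r` of the restricted diagram `T[q]` (boxes of `T` with labels at
most `q`). -/
def rowLenT (μ : YoungDiagram) (T : ℕ × ℕ → ℕ) (q r : ℕ) : ℕ :=
  (μ.cells.filter fun b => b.1 = r ∧ T b ≤ q).card

/-- `r` is the row of `T` containing the entry `q`. -/
def IsRowOf (μ : YoungDiagram) (T : ℕ × ℕ → ℕ) (q r : ℕ) : Prop :=
  ∃ c, (r, c) ∈ μ ∧ T (r, c) = q

/-- The number `ℓ_{q-1}(T)` of `q`-row inversions of `T`: the number of rows of `T[q]`
strictly above the row `rq` containing `q` and of the same length as it, plus the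
number of rows of `T[q]` of strictly greater length than the row containing `q`. -/
def ellT (μ : YoungDiagram) (T : ℕ × ℕ → ℕ) (n q rq : ℕ) : ℕ :=
  ((Finset.range n).filter fun r => r < rq ∧ rowLenT μ T q r = rowLenT μ T q rq).card +
  ((Finset.range n).filter fun r => rowLenT μ T q rq < rowLenT μ T q r).card

lemma row_strict_lt {μ : YoungDiagram} {T : ℕ × ℕ → ℕ}
    (hrow : ∀ r c, (r, c) ∈ μ → (r, c + 1) ∈ μ → T (r, c) < T (r, c + 1))
    {r c1 c2 : ℕ} (h : c1 < c2) (hm : (r, c2) ∈ μ) : T (r, c1) < T (r, c2) := by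
  induction c2 with
  | zero => omega
  | succ c ih =>
    have hc : (r, c) ∈ μ := μ.up_left_mem le_rfl (Nat.le_succ c) hm
    rcases Nat.lt_succ_iff_lt_or_eq.mp h with h' | h'
    · exact (ih h' hc).trans (hrow r c hc hm)
    · subst h'; exact hrow r c1 hc hm

lemma rowLenT_eq {μ : YoungDiagram} {T : ℕ × ℕ → ℕ}
    (hrow : ∀ r c, (r, c) ∈ μ → (r, c + 1) ∈ μ → T (r, c) < T (r, c + 1))
    {q r c : ℕ} (hm : (r, c) ∈ μ) (hq : T (r, c) = q) :
    rowLenT μ T q r = c + 1 := by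
  have hset : μ.cells.filter (fun b => b.1 = r ∧ T b ≤ q)
      = (Finset.range (c + 1)).image (fun y => (r, y)) := by
    ext ⟨x, y⟩
    simp only [Finset.mem_filter, Finset.mem_image, Finset.mem_range,
      YoungDiagram.mem_cells]
    constructor
    · rintro ⟨hmem, rfl, hle⟩
      refine ⟨y, ?_, rfl⟩
      by_contra hy
      have := row_strict_lt hrow (show c < y by omega) hmem
      omega
    · rintro ⟨y', hy', hyy⟩
      rw [Prod.mk.injEq] at hyy
      obtain ⟨rfl, rfl⟩ := hyy
      refine ⟨μ.up_left_mem le_rfl (by omega) hm, rfl, ?_⟩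
      rcases eq_or_lt_of_le (show y' ≤ c by omega) with h | h
      · subst h; omega
      · exact le_of_lt (hq ▸ row_strict_lt hrow h hm)
  rw [rowLenT, hset, Finset.card_image_of_injective _ (fun a b h => by simpa using h),
    Finset.card_range]

/-- The unique box holding value `q`. -/
lemma rowLenT_succ {μ : YoungDiagram} {T : ℕ × ℕ → ℕ}
    (hTinj : ∀ b ∈ μ.cells, ∀ b' ∈ μ.cells, T b = T b' → b = b')
    {q rq cq : ℕ} (hm : (rq, cq) ∈ μ) (hq : T (rq, cq) = q + 1) (r : ℕ) :
    rowLenT μ T (q + 1) r = rowLenT μ T q r + (if r = rq then 1 else 0) := by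
  classical
  have hsplit : μ.cells.filter (fun b => b.1 = r ∧ T b ≤ q + 1)
      = μ.cells.filter (fun b => b.1 = r ∧ T b ≤ q)
        ∪ μ.cells.filter (fun b => b.1 = r ∧ T b = q + 1) := by
    rw [← Finset.filter_or]
    apply Finset.filter_congr
    intro b _
    constructor
    · rintro ⟨rfl, hle⟩
      rcases Nat.le_succ_iff.mp hle with h | h
      · exact Or.inl ⟨rfl, h⟩
      · exact Or.inr ⟨rfl, h⟩
    · rintro (⟨rfl, h⟩ | ⟨rfl, h⟩) <;> exact ⟨rfl, by omega⟩
  have hdisj : Disjoint (μ.cells.filter (fun b => b.1 = r ∧ T b ≤ q))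
      (μ.cells.filter (fun b => b.1 = r ∧ T b = q + 1)) := by
    rw [Finset.disjoint_filter]
    rintro b _ ⟨_, hle⟩ ⟨_, heq⟩
    omega
  have hsingle : μ.cells.filter (fun b => b.1 = r ∧ T b = q + 1)
      = if r = rq then {(rq, cq)} else ∅ := by
    split
    · next h =>
      subst h
      ext b
      simp only [Finset.mem_filter, Finset.mem_singleton, YoungDiagram.mem_cells]
      constructor
      · rintro ⟨hb, hb1, hb2⟩
        exact hTinj b (YoungDiagram.mem_cells _ |>.mpr hb) (r, cq)
          (YoungDiagram.mem_cells _ |>.mpr hm) (by rw [hb2, hq])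
      · rintro rfl
        exact ⟨hm, rfl, hq⟩
    · next h =>
      ext b
      simp only [Finset.mem_filter, Finset.notMem_empty, iff_false, not_and,
        YoungDiagram.mem_cells]
      rintro hb rfl hbq
      exact h (congrArg Prod.fst
        (hTinj b (YoungDiagram.mem_cells _ |>.mpr hb) (rq, cq)
          (YoungDiagram.mem_cells _ |>.mpr hm) (by rw [hbq, hq])))
  rw [rowLenT, hsplit, Finset.card_union_of_disjoint hdisj, hsingle, rowLenT]
  split <;> simp

lemma baseLabel_lt_of_col {μ : YoungDiagram} {r c r' c' : ℕ}
    (h : (r, c) ∈ μ) (hc : c < c') : baseLabel μ r c < baseLabel μ r' c' := by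
  have hr : r < μ.colLen c := YoungDiagram.mem_iff_lt_colLen.mp h
  have hle : (∑ x ∈ Finset.range (c + 1), μ.colLen x) ≤ ∑ x ∈ Finset.range c', μ.colLen x :=
    Finset.sum_le_sum_of_subset (Finset.range_subset_range.mpr hc)
  rw [Finset.sum_range_succ] at hle
  unfold baseLabel
  omega

lemma baseLabel_lt_of_row {μ : YoungDiagram} {r r' c : ℕ}
    (h : (r, c) ∈ μ) (hr : r' < r) : baseLabel μ r c < baseLabel μ r' c := by
  have hrL : r < μ.colLen c := YoungDiagram.mem_iff_lt_colLen.mp h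
  unfold baseLabel
  omega

lemma row_lt_card {μ : YoungDiagram} {r c : ℕ} (h : (r, c) ∈ μ) : r < μ.card := by
  have hsub : (Finset.range (r + 1)).image (fun x => (x, c)) ⊆ μ.cells := by
    intro b hb
    simp only [Finset.mem_image, Finset.mem_range] at hb
    obtain ⟨x, hx, rfl⟩ := hb
    exact (YoungDiagram.mem_cells _).mpr (μ.up_left_mem (by omega) le_rfl h)
  have := Finset.card_le_card hsub
  rw [Finset.card_image_of_injective _ (fun a b h => by simpa using h),
    Finset.card_range] at this
  show r < μ.cells.card
  omega

/-- let `T` be a row-strict tableau of shape `μ ⊢ n` (a bijective filling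
by `1, …, n` increasing along rows) and let `w ∈ S_n` be the permutation sending `j` to
the base-filling label of the box of `T` containing `j` (both read `1`-indexed:
`w ⟨j-1⟩` has value index `baseLabel`). Then for `1 ≤ i ≤ n-1`,
`w(i) < w(i+1)` iff `ℓ_i(T) ≤ ℓ_{i-1}(T)`. -/
theorem statement18 (μ : YoungDiagram) (n : ℕ) (hn : μ.card = n)
    (T : ℕ × ℕ → ℕ)
    (hTmem : ∀ b ∈ μ.cells, T b ∈ Finset.Icc 1 n)
    (hTinj : ∀ b ∈ μ.cells, ∀ b' ∈ μ.cells, T b = T b' → b = b')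
    (hTsurj : ∀ k ∈ Finset.Icc 1 n, ∃ b ∈ μ.cells, T b = k)
    (hrow : ∀ r c, (r, c) ∈ μ → (r, c + 1) ∈ μ → T (r, c) < T (r, c + 1))
    (w : Equiv.Perm (Fin n))
    (hw : ∀ b ∈ μ.cells, ∀ j : Fin n, T b = j.val + 1 → (w j).val = baseLabel μ b.1 b.2)
    (i : ℕ) (hi1 : 1 ≤ i) (hi2 : i ≤ n - 1)
    (h1 : i - 1 < n) (h2 : i < n)
    (ri ri1 : ℕ)
    (hri : IsRowOf μ T i ri) (hri1 : IsRowOf μ T (i + 1) ri1) :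
    w ⟨i - 1, h1⟩ < w ⟨i, h2⟩ ↔ ellT μ T n (i + 1) ri1 ≤ ellT μ T n i ri := by
  classical
  obtain ⟨ci, hci, hTci⟩ := hri
  obtain ⟨ci1, hci1, hTci1⟩ := hri1
  -- values of w
  have hwi : (w ⟨i - 1, h1⟩).val = baseLabel μ ri ci :=
    hw (ri, ci) ((YoungDiagram.mem_cells _).mpr hci) ⟨i - 1, h1⟩ (by simp; omega)
  have hwi1 : (w ⟨i, h2⟩).val = baseLabel μ ri1 ci1 :=
    hw (ri1, ci1) ((YoungDiagram.mem_cells _).mpr hci1) ⟨i, h2⟩ (by simpa using hTci1)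
  have hlt : (w ⟨i - 1, h1⟩ < w ⟨i, h2⟩) ↔ baseLabel μ ri ci < baseLabel μ ri1 ci1 := by
    rw [Fin.lt_def, hwi, hwi1]
  rw [hlt]
  -- row-length facts
  have ha : rowLenT μ T i ri = ci + 1 := rowLenT_eq hrow hci hTci
  have hb1 : rowLenT μ T (i + 1) ri1 = ci1 + 1 := rowLenT_eq hrow hci1 hTci1
  have hB : ∀ r, rowLenT μ T (i + 1) r
      = rowLenT μ T i r + (if r = ri1 then 1 else 0) :=
    rowLenT_succ hTinj hci1 hTci1
  have hbb : rowLenT μ T i ri1 = ci1 := by have := hB ri1; simp at this; omega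
  set f : ℕ → ℕ := fun r => rowLenT μ T i r with hf
  -- rewrite ellT at q = i+1 in terms of f
  have hellEq : ellT μ T n (i + 1) ri1
      = ((Finset.range n).filter fun r => r < ri1 ∧ f r = ci1 + 1).card
        + ((Finset.range n).filter fun r => ci1 + 1 < f r).card := by
    unfold ellT
    congr 1
    · apply congrArg
      apply Finset.filter_congr
      intro r _
      have := hB r
      rw [hb1]
      by_cases h : r = ri1
      · subst h; simp
      · simp [h, hf] at this ⊢; omega
    · apply congrArg
      apply Finset.filter_congr
      intro r _
      have := hB r
      rw [hb1]
      by_cases h : r = ri1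
      · subst h; simp [hf] at this ⊢; omega
      · simp [h, hf] at this ⊢; omega
  have hellEq0 : ellT μ T n i ri
      = ((Finset.range n).filter fun r => r < ri ∧ f r = ci + 1).card
        + ((Finset.range n).filter fun r => ci + 1 < f r).card := by
    unfold ellT; rw [ha]
  rw [hellEq, hellEq0]
  set A : Finset ℕ := (Finset.range n).filter fun r => r < ri ∧ f r = ci + 1 with hA
  set G : Finset ℕ := (Finset.range n).filter fun r => ci + 1 < f r with hG
  set A' : Finset ℕ := (Finset.range n).filter fun r => r < ri1 ∧ f r = ci1 + 1 with hA'
  set G' : Finset ℕ := (Finset.range n).filter fun r => ci1 + 1 < f r with hG'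
  have hfri : f ri = ci + 1 := ha
  have hfri1 : f ri1 = ci1 := hbb
  have hriN : ri < n := hn ▸ row_lt_card hci
  have hri1N : ri1 < n := hn ▸ row_lt_card hci1
  rcases lt_trichotomy ci ci1 with hc | hc | hc
  · -- ci < ci1 : both sides true
    refine iff_of_true (baseLabel_lt_of_col hci hc) ?_
    have hsub : A' ∪ G' ⊆ G := by
      intro r hr
      simp only [hA', hG', hA, hG, Finset.mem_union, Finset.mem_filter] at hr ⊢
      rcases hr with ⟨h, _, h2⟩ | ⟨h, h2⟩ <;> exact ⟨h, by omega⟩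
    have hdisj : Disjoint A' G' := by
      rw [Finset.disjoint_filter]
      rintro r _ ⟨_, h⟩
      omega
    calc A'.card + G'.card = (A' ∪ G').card := (Finset.card_union_of_disjoint hdisj).symm
      _ ≤ G.card := Finset.card_le_card hsub
      _ ≤ A.card + G.card := Nat.le_add_left _ _
  · -- ci = ci1
    subst hc
    have hrne : ri ≠ ri1 := fun h => by rw [h, hfri1] at hfri; omega
    have hGG : G = G' := rfl
    rcases lt_or_gt_of_ne hrne with hrr | hrr
    · -- ri < ri1 : both sides false
      refine iff_of_false ?_ ?_
      · have := baseLabel_lt_of_row hci1 hrr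
        omega
      · have hss : A ⊂ A' := by
          constructor
          · intro r hr
            simp only [hA, hA', Finset.mem_filter] at hr ⊢
            exact ⟨hr.1, by omega, by omega⟩
          · intro hcon
            have : ri ∈ A' := by
              simp only [hA', Finset.mem_filter, Finset.mem_range]
              exact ⟨hriN, hrr, by omega⟩
            have := hcon this
            simp only [hA, Finset.mem_filter] at this
            omega
        have := Finset.card_lt_card hss
        have hGc : G.card = G'.card := by rw [hGG]
        omega
    · -- ri1 < ri : both sides true
      refine iff_of_true (baseLabel_lt_of_row hci hrr) ?_
      have hsub : A' ⊆ A := by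
        intro r hr
        simp only [hA, hA', Finset.mem_filter] at hr ⊢
        exact ⟨hr.1, by omega, by omega⟩
      have := Finset.card_le_card hsub
      have hGc : G.card = G'.card := by rw [hGG]
      omega
  · -- ci1 < ci : both sides false
    refine iff_of_false ?_ ?_
    · have := baseLabel_lt_of_col (r' := ri) hci1 hc
      omega
    · have hsub : insert ri (A ∪ G) ⊆ G' := by
        intro r hr
        simp only [Finset.mem_insert, Finset.mem_union, hA, hG, hG',
          Finset.mem_filter, Finset.mem_range] at hr ⊢
        rcases hr with rfl | ⟨h, _, h2⟩ | ⟨h, h2⟩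
        · exact ⟨hriN, by omega⟩
        · exact ⟨h, by omega⟩
        · exact ⟨h, by omega⟩
      have hdisjAG : Disjoint A G := by
        rw [Finset.disjoint_filter]
        rintro r _ ⟨_, h⟩
        omega
      have hnotin : ri ∉ A ∪ G := by
        simp only [Finset.mem_union, hA, hG, Finset.mem_filter]
        push_neg
        constructor
        · rintro _ h; omega
        · rintro _; omega
      have hcard : (insert ri (A ∪ G)).card = A.card + G.card + 1 := by
        rw [Finset.card_insert_of_notMem hnotin, Finset.card_union_of_disjoint hdisjAG]
      have := Finset.card_le_card hsub
      omega
end
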